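/- arXiv:1708.04914 — 4 statements merged into one kernel-verified Lean document; each statement's English description precedes it below -/
import Mathlib

section
/- The continuous binomial coefficient B(t,s) := {t+s brace s} = 2∑_{n=0}^∞ sⁿtⁿ/(n!)² + (t+s)∑_{n=0}^∞ sⁿtⁿ/((n+1)!n!) satisfies the partial differential equation ∂²B/∂t∂s = B for all s, t ∈ ℂ (or ℝ). -/
/-!
Put `F k x = ∑ xⁿ / ((n + k)! n!)`. With `x = t s` one has `B(t, s) = 2 F 0 x + (t + s) F 1 x`.
Termwise differentiation gives `F k' = F (k + 1)`, and comparing coefficients gives the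
recurrence `x F (k + 2) + (k + 1) F (k + 1) = F k`. Differentiating in `s` and then in `t`
produces a combination of `F 1`, `F 2`, `F 3` which the recurrences for `k = 0, 1` collapse back
to `2 F 0 x + (t + s) F 1 x`.
-/

/-- The continuous binomial coefficient `{t brace a}`. -/
noncomputable def contBinom (t a : ℂ) : ℂ :=
  2 * ∑' n : ℕ, a ^ n * (t - a) ^ n / ((Nat.factorial n : ℂ) ^ 2) +
    t * ∑' n : ℕ, a ^ n * (t - a) ^ n / ((Nat.factorial (n + 1) : ℂ) * (Nat.factorial n : ℂ))

open scoped Nat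

section EntireSeries

variable {𝕜 : Type*} [RCLike 𝕜] {c : ℕ → 𝕜}

theorem summable_mul_pow_of_norm_le_inv_factorial (hc : ∀ n, ‖c n‖ ≤ (n ! : ℝ)⁻¹) (x : 𝕜) :
    Summable fun n => c n * x ^ n := by
  refine .of_norm_bounded (Real.summable_pow_div_factorial ‖x‖) fun n => ?_
  rw [norm_mul, norm_pow, div_eq_inv_mul]
  gcongr
  exact hc n

theorem hasDerivAt_tsum_mul_pow_of_norm_le_inv_factorial (hc : ∀ n, ‖c n‖ ≤ (n ! : ℝ)⁻¹)
    (x : 𝕜) :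
    HasDerivAt (fun y => ∑' n, c n * y ^ n) (∑' n : ℕ, ((n : 𝕜) + 1) * c (n + 1) * x ^ n) x := by
  set R := ‖x‖ + 1
  have hR : 1 ≤ R := le_add_of_nonneg_left (norm_nonneg x)
  have hx : x ∈ Metric.ball (0 : 𝕜) R := by simp [R]
  -- `n ≤ 2 ^ n` gives a bound on the differentiated terms that is uniform on the ball
  have bound : ∀ n, ∀ y ∈ Metric.ball (0 : 𝕜) R,
      ‖c n * ((n : 𝕜) * y ^ (n - 1))‖ ≤ (2 * R) ^ n / n ! := fun n y hy => by
    have hy : ‖y‖ ≤ R := (mem_ball_zero_iff.mp hy).le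
    have hn : (n : ℝ) ≤ 2 ^ n := mod_cast n.lt_two_pow_self.le
    calc ‖c n * ((n : 𝕜) * y ^ (n - 1))‖ = ‖c n‖ * (n * ‖y‖ ^ (n - 1)) := by simp
      _ ≤ (n ! : ℝ)⁻¹ * (2 ^ n * R ^ n) := by
        gcongr
        · exact hc n
        · exact (pow_le_pow_left₀ (norm_nonneg y) hy _).trans (pow_le_pow_right₀ hR (n.sub_le 1))
      _ = (2 * R) ^ n / n ! := by rw [mul_pow, div_eq_inv_mul]
  have hderiv := hasDerivAt_tsum_of_isPreconnected (Real.summable_pow_div_factorial (2 * R))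
    Metric.isOpen_ball (convex_ball (0 : 𝕜) R).isPreconnected
    (fun n y _ => (hasDerivAt_pow n y).const_mul (c n)) bound
    (Metric.mem_ball_self (by linarith)) (summable_mul_pow_of_norm_le_inv_factorial hc 0) hx
  have hsum : Summable fun n => c n * ((n : 𝕜) * x ^ (n - 1)) :=
    .of_norm_bounded (Real.summable_pow_div_factorial (2 * R)) fun n => bound n x hx
  refine hderiv.congr_deriv ?_
  rw [hsum.tsum_eq_zero_add]
  simp only [Nat.cast_zero, zero_mul, mul_zero, zero_add, Nat.cast_succ, add_tsub_cancel_right]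
  exact tsum_congr fun n => by ring

end EntireSeries

/-- `besselSeries k x = x ^ (-k / 2) * I_k (2 * √x)`, with `I_k` the modified Bessel function. -/
noncomputable def besselSeries (k : ℕ) (x : ℂ) : ℂ :=
  ∑' n : ℕ, ((n + k)! * n ! : ℂ)⁻¹ * x ^ n

theorem norm_inv_factorial_add_mul_factorial_le (k n : ℕ) :
    ‖((n + k)! * n ! : ℂ)⁻¹‖ ≤ (n ! : ℝ)⁻¹ := by
  rw [norm_inv, norm_mul, Complex.norm_natCast, Complex.norm_natCast]
  gcongr
  exact le_mul_of_one_le_left (by positivity) (Nat.one_le_cast.mpr (n + k).factorial_pos)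

theorem succ_mul_inv_factorial_add_mul_factorial (k n : ℕ) :
    ((n : ℂ) + 1) * ((n + 1 + k)! * (n + 1)! : ℂ)⁻¹ = ((n + (k + 1))! * n ! : ℂ)⁻¹ := by
  rw [show n + 1 + k = n + (k + 1) by ring, Nat.factorial_succ n]
  push_cast
  field_simp

theorem inv_factorial_add_mul_factorial_succ (k n : ℕ) :
    ((n + (k + 2))! * n ! : ℂ)⁻¹ + (k + 1) * ((n + 1 + (k + 1))! * (n + 1)! : ℂ)⁻¹ =
      ((n + 1 + k)! * (n + 1)! : ℂ)⁻¹ := by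
  rw [show n + 1 + (k + 1) = n + (k + 2) by ring, show n + (k + 2) = (n + 1 + k) + 1 by ring,
    Nat.factorial_succ (n + 1 + k), Nat.factorial_succ n]
  have := (n + 1 + k).factorial_ne_zero
  have := n.factorial_ne_zero
  push_cast
  have : (n : ℂ) + 1 + k + 1 ≠ 0 := mod_cast (n + 1 + k).succ_ne_zero
  have : (n : ℂ) + 1 ≠ 0 := mod_cast n.succ_ne_zero
  field_simp
  ring

theorem hasDerivAt_besselSeries (k : ℕ) (x : ℂ) :
    HasDerivAt (besselSeries k) (besselSeries (k + 1) x) x := by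
  refine (hasDerivAt_tsum_mul_pow_of_norm_le_inv_factorial
    (norm_inv_factorial_add_mul_factorial_le k) x).congr_deriv (tsum_congr fun n => ?_)
  rw [succ_mul_inv_factorial_add_mul_factorial]

theorem besselSeries_recurrence (k : ℕ) (x : ℂ) :
    x * besselSeries (k + 2) x + (k + 1) * besselSeries (k + 1) x = besselSeries k x := by
  have hF (j : ℕ) : HasSum (fun n : ℕ => ((n + j)! * n ! : ℂ)⁻¹ * x ^ n) (besselSeries j x) :=
    (summable_mul_pow_of_norm_le_inv_factorial (norm_inv_factorial_add_mul_factorial_le j) x).hasSum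
  have hshift := (hasSum_nat_add_iff' 1).mpr (hF (k + 1))
  have hconst : (k + 1 : ℂ) * ((k + 1)! : ℂ)⁻¹ = (k ! : ℂ)⁻¹ := by
    have := k.factorial_ne_zero
    rw [Nat.factorial_succ]
    push_cast
    field_simp
  have hsum := ((hF (k + 2)).mul_left x).add (hshift.mul_left ((k : ℂ) + 1))
  have htail := ((hasSum_nat_add_iff' 1).mpr (hF k)).unique
    (hsum.congr_fun fun n => by rw [← inv_factorial_add_mul_factorial_succ]; ring)
  simp only [Finset.range_one, Finset.sum_singleton, pow_zero, mul_one, zero_add,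
    Nat.factorial_zero, Nat.cast_one] at htail
  linear_combination hconst - htail

theorem contBinom_add_eq_besselSeries (t s : ℂ) :
    contBinom (t + s) s = 2 * besselSeries 0 (t * s) + (t + s) * besselSeries 1 (t * s) := by
  rw [contBinom, add_sub_cancel_right]
  congr 2
  · exact tsum_congr fun n => by rw [add_zero, sq]; ring
  · exact tsum_congr fun n => by ring

theorem hasDerivAt_besselSeries_const_mul (k : ℕ) (t s : ℂ) :
    HasDerivAt (fun s' => besselSeries k (t * s')) (t * besselSeries (k + 1) (t * s)) s :=
  ((hasDerivAt_besselSeries k (t * s)).comp s (hasDerivAt_const_mul t)).congr_deriv (mul_comm _ _)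

theorem hasDerivAt_besselSeries_mul_const (k : ℕ) (t s : ℂ) :
    HasDerivAt (fun t' => besselSeries k (t' * s)) (s * besselSeries (k + 1) (t * s)) t := by
  simpa only [mul_comm _ s] using hasDerivAt_besselSeries_const_mul k s t

theorem deriv_contBinom_add_eq_besselSeries (t s : ℂ) :
    deriv (fun s' => contBinom (t + s') s') s =
      (2 * t + 1) * besselSeries 1 (t * s) + t * (t + s) * besselSeries 2 (t * s) := by
  have h : HasDerivAt (fun s' => 2 * besselSeries 0 (t * s') + (t + s') * besselSeries 1 (t * s'))
      (2 * (t * besselSeries 1 (t * s)) +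
        (1 * besselSeries 1 (t * s) + (t + s) * (t * besselSeries 2 (t * s)))) s :=
    ((hasDerivAt_besselSeries_const_mul 0 t s).const_mul 2).add
      (((hasDerivAt_id' s).const_add t).mul (hasDerivAt_besselSeries_const_mul 1 t s))
  rw [funext (contBinom_add_eq_besselSeries t), h.deriv]
  ring

/-- `B(t,s) = {t+s brace s}` satisfies `∂²B/∂t∂s = B`. -/
theorem contBinom_pde (s t : ℂ) :
    deriv (fun t' : ℂ => deriv (fun s' : ℂ => contBinom (t' + s') s') s) t =
      contBinom (t + s) s := by
  have h : HasDerivAt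
      (fun t' => (2 * t' + 1) * besselSeries 1 (t' * s) + t' * (t' + s) * besselSeries 2 (t' * s))
      (2 * 1 * besselSeries 1 (t * s) + (2 * t + 1) * (s * besselSeries 2 (t * s)) +
        ((1 * (t + s) + t * 1) * besselSeries 2 (t * s) +
          t * (t + s) * (s * besselSeries 3 (t * s)))) t :=
    ((((hasDerivAt_id' t).const_mul 2).add_const 1).mul
      (hasDerivAt_besselSeries_mul_const 1 t s)).add
      (((hasDerivAt_id' t).mul ((hasDerivAt_id' t).add_const s)).mul
        (hasDerivAt_besselSeries_mul_const 2 t s))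
  rw [funext fun t' => deriv_contBinom_add_eq_besselSeries t' s, h.deriv,
    contBinom_add_eq_besselSeries]
  linear_combination 2 * besselSeries_recurrence 0 (t * s) +
    (t + s) * besselSeries_recurrence 1 (t * s)
end

section
/- For n ≥ 1, the n-th partial derivative of {t+s brace s} with respect to t equals s^{n-1}(2s+n)C_n(st) + (t+s)sⁿC_{n+1}(st), where C_ν is the Bessel-Clifford function. -/
/-!
Substituting `t ↦ t + s` in the defining series gives
`{t + s brace s} = 2 C₀(st) + (t + s) C₁(st)`. Since `C_ν' = C_{ν+1}` (term-by-term
differentiation of an entire power series), `d/dt` maps `a C_ν(st) + (t + s) b C_{ν+1}(st)` to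
`(a s + b) C_{ν+1}(st) + (t + s) (b s) C_{ν+2}(st)`, and the claim follows by induction on `n`.
-/

/-- The Bessel–Clifford function of the first kind `C_ν(z) = ∑ z^m/(m!(m+ν)!)`. -/
noncomputable def besselClifford (ν : ℕ) (z : ℂ) : ℂ :=
  ∑' m : ℕ, z ^ m / ((Nat.factorial m : ℂ) * (Nat.factorial (m + ν) : ℂ))

open Metric

theorem norm_besselClifford_term_le (ν m : ℕ) (z : ℂ) :
    ‖z ^ m / ((m.factorial : ℂ) * ((m + ν).factorial : ℂ))‖ ≤ ‖z‖ ^ m / m.factorial := by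
  rw [norm_div, norm_pow, norm_mul, Complex.norm_natCast, Complex.norm_natCast]
  gcongr
  exact le_mul_of_one_le_right (by positivity) (mod_cast (m + ν).factorial_pos)

theorem hasSum_besselClifford (ν : ℕ) (z : ℂ) :
    HasSum (fun m : ℕ => z ^ m / ((m.factorial : ℂ) * ((m + ν).factorial : ℂ)))
      (besselClifford ν z) :=
  (Summable.of_norm_bounded (Real.summable_pow_div_factorial ‖z‖)
    (norm_besselClifford_term_le ν · z)).hasSum

theorem hasDerivAt_besselClifford (ν : ℕ) (z : ℂ) :
    HasDerivAt (besselClifford ν) (besselClifford (ν + 1) z) z := by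
  set F : ℕ → ℂ → ℂ := fun m w => w ^ m / ((m.factorial : ℂ) * ((m + ν).factorial : ℂ))
  set U := ball (0 : ℂ) (‖z‖ + 1)
  have hz : z ∈ U := mem_ball_zero_iff.mpr (lt_add_one _)
  have hsum := Real.summable_pow_div_factorial (‖z‖ + 1)
  have hF : ∀ m, DifferentiableOn ℂ (F m) U := fun m => by fun_prop
  have hF_le : ∀ m, ∀ w ∈ U, ‖F m w‖ ≤ (‖z‖ + 1) ^ m / m.factorial := fun m w hw =>
    (norm_besselClifford_term_le ν m w).trans (by gcongr; exact (mem_ball_zero_iff.mp hw).le)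
  have hdiff : DifferentiableAt ℂ (besselClifford ν) z :=
    (Complex.differentiableOn_tsum_of_summable_norm hsum hF isOpen_ball hF_le).differentiableAt
      (isOpen_ball.mem_nhds hz)
  refine hdiff.hasDerivAt.congr_deriv ?_
  refine (Complex.hasSum_deriv_of_summable_norm hsum hF isOpen_ball hF_le hz).unique ?_
  have hterm : ∀ m : ℕ, deriv (F (m + 1)) z =
      z ^ m / ((m.factorial : ℂ) * ((m + (ν + 1)).factorial : ℂ)) := fun m => by
    simp only [F, deriv_div_const, (hasDerivAt_pow (m + 1) z).deriv, Nat.add_sub_cancel,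
      Nat.factorial_succ, ← add_assoc, add_right_comm m 1 ν]
    push_cast
    field_simp
  have hterm0 : deriv (F 0) z = 0 := by simp [F]
  rw [← hasSum_nat_add_iff' 1, Finset.sum_range_one, hterm0, sub_zero]
  simpa only [hterm] using hasSum_besselClifford (ν + 1) z

theorem hasDerivAt_besselClifford_mul (ν : ℕ) (s t : ℂ) :
    HasDerivAt (fun t' => besselClifford ν (s * t')) (s * besselClifford (ν + 1) (s * t)) t := by
  have h := (hasDerivAt_besselClifford ν (s * t)).comp t ((hasDerivAt_id t).const_mul s)
  rwa [mul_one, mul_comm] at h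

theorem contBinom_add_self (s t : ℂ) :
    contBinom (t + s) s = 2 * besselClifford 0 (s * t) + (t + s) * besselClifford 1 (s * t) := by
  simp only [contBinom, besselClifford, add_sub_cancel_right, add_zero, ← mul_pow, sq, mul_comm]

theorem hasDerivAt_besselClifford_pair (ν : ℕ) (a b s t : ℂ) :
    HasDerivAt
      (fun t' => a * besselClifford ν (s * t') + (t' + s) * b * besselClifford (ν + 1) (s * t'))
      ((a * s + b) * besselClifford (ν + 1) (s * t) +
        (t + s) * (b * s) * besselClifford (ν + 2) (s * t)) t := by
  refine (((hasDerivAt_besselClifford_mul ν s t).const_mul a).add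
    ((((hasDerivAt_id t).add_const s).mul_const b).mul
      (hasDerivAt_besselClifford_mul (ν + 1) s t))).congr_deriv ?_
  simp only [id]
  ring

theorem contBinom_iteratedDeriv (n : ℕ) (hn : 1 ≤ n) (s t : ℂ) :
    iteratedDeriv n (fun t' : ℂ => contBinom (t' + s) s) t =
      s ^ (n - 1) * (2 * s + (n : ℂ)) * besselClifford n (s * t) +
        (t + s) * s ^ n * besselClifford (n + 1) (s * t) := by
  revert t
  rw [← funext_iff]
  induction n, hn using Nat.le_induction with
  | base =>
    funext t
    have h := hasDerivAt_besselClifford_pair 0 2 1 s t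
    simp only [mul_one] at h
    rw [iteratedDeriv_one, funext (contBinom_add_self s), h.deriv]
    norm_num
  | succ n hn ih =>
    funext t
    obtain ⟨m, rfl⟩ : ∃ m, n = m + 1 := ⟨n - 1, by omega⟩
    rw [iteratedDeriv_succ, ih, (hasDerivAt_besselClifford_pair _ _ _ s t).deriv]
    simp only [Nat.add_sub_cancel]
    push_cast
    ring
end

section
/- Let k₁, k₂ ∈ ℕ, λ, K ∈ ℝ, r ∈ ℕ, a, b > 0, and let f : ℝ → ℝ be differentiable with continuous derivative. Define I₀(a,b) = λ a^{k₁} b^{k₂}/(k₁! k₂!) and recursively I_m(a,b) = ∫₀ᵃ∫₀ᵇ I_{m-1}(x,y) dy dx + (b^{m+r}/(r+m)!) ∫₀ᵃ (x^{m-1}/(m-1)!) f'(K+x) dx for m ≥ 1. Then for all m ≥ 1, I_m(a,b) = λ a^{k₁+m} b^{k₂+m}/((k₁+m)!(k₂+m)!) + (a^{m-1}/(m-1)!)(b^{m+r}/(m+r)!)(f(K+a) − f(K)). -/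
/-!
Put `g x = f (K + x) - f K`. The closed form of `I (m + 1)` is a sum of two products of a
function of `x` and a function of `y`, so its double integral factors. The polynomial part just
shifts both exponents by one; the `g`-part produces `∫₀ᵃ xᵐ/m! g(x) dx`, which cancels against the
new source term once `∫₀ᵃ xᵐ⁺¹/(m+1)! g'(x) dx` is integrated by parts.
-/

open intervalIntegral
open MeasureTheory (volume)

theorem hasDerivAt_pow_succ_div_factorial (n : ℕ) (x : ℝ) :
    HasDerivAt (fun x : ℝ => x ^ (n + 1) / ((n + 1).factorial : ℝ))
      (x ^ n / (n.factorial : ℝ)) x := by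
  refine ((hasDerivAt_pow (n + 1) x).div_const _).congr_deriv ?_
  rw [Nat.factorial_succ, Nat.cast_mul]
  field_simp
  push_cast
  ring

theorem integral_pow_div_factorial (n : ℕ) (b : ℝ) :
    ∫ y in (0 : ℝ)..b, y ^ n / (n.factorial : ℝ) = b ^ (n + 1) / ((n + 1).factorial : ℝ) := by
  rw [integral_eq_sub_of_hasDerivAt (fun x _ => hasDerivAt_pow_succ_div_factorial n x)
    (((continuous_pow n).div_const _).intervalIntegrable _ _)]
  simp

theorem integral_pow_succ_div_factorial_mul_deriv {g g' : ℝ → ℝ}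
    (hg : ∀ x, HasDerivAt g (g' x) x) (hg' : Continuous g') (m : ℕ) (a : ℝ) :
    ∫ x in (0 : ℝ)..a, x ^ (m + 1) / ((m + 1).factorial : ℝ) * g' x =
      a ^ (m + 1) / ((m + 1).factorial : ℝ) * g a -
        ∫ x in (0 : ℝ)..a, x ^ m / (m.factorial : ℝ) * g x := by
  rw [integral_mul_deriv_eq_deriv_mul (fun x _ => hasDerivAt_pow_succ_div_factorial m x)
    (fun x _ => hg x) (((continuous_pow m).div_const _).intervalIntegrable _ _)
    (hg'.intervalIntegrable _ _)]
  simp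

theorem integral_integral_mul_add_mul {u₁ v₁ u₂ v₂ : ℝ → ℝ} {a b : ℝ}
    (hu₁ : IntervalIntegrable u₁ volume 0 a)
    (hu₂ : IntervalIntegrable u₂ volume 0 a)
    (hv₁ : IntervalIntegrable v₁ volume 0 b)
    (hv₂ : IntervalIntegrable v₂ volume 0 b) :
    ∫ x in (0 : ℝ)..a, ∫ y in (0 : ℝ)..b, (u₁ x * v₁ y + u₂ x * v₂ y) =
      (∫ x in (0 : ℝ)..a, u₁ x) * (∫ y in (0 : ℝ)..b, v₁ y) +
        (∫ x in (0 : ℝ)..a, u₂ x) * ∫ y in (0 : ℝ)..b, v₂ y := by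
  have inner : ∀ x, ∫ y in (0 : ℝ)..b, (u₁ x * v₁ y + u₂ x * v₂ y) =
      u₁ x * (∫ y in (0 : ℝ)..b, v₁ y) + u₂ x * ∫ y in (0 : ℝ)..b, v₂ y := fun x => by
    rw [integral_add (hv₁.const_mul _) (hv₂.const_mul _), integral_const_mul, integral_const_mul]
  simp_rw [inner]
  rw [integral_add (hu₁.mul_const _) (hu₂.mul_const _), integral_mul_const, integral_mul_const]

theorem eq_of_double_integral_recurrence {k₁ k₂ r : ℕ} {lam : ℝ} {g g' : ℝ → ℝ}
    (hg : ∀ x, HasDerivAt g (g' x) x) (hg' : Continuous g') (hg0 : g 0 = 0)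
    {I : ℕ → ℝ → ℝ → ℝ}
    (hI0 : ∀ a b, I 0 a b = lam * (a ^ k₁ / (k₁.factorial : ℝ)) * (b ^ k₂ / (k₂.factorial : ℝ)))
    (hIrec : ∀ m a b, I (m + 1) a b =
      (∫ x in (0 : ℝ)..a, ∫ y in (0 : ℝ)..b, I m x y) +
        b ^ (r + m + 1) / ((r + m + 1).factorial : ℝ) *
          ∫ x in (0 : ℝ)..a, x ^ m / (m.factorial : ℝ) * g' x) (m : ℕ) :
    I (m + 1) = fun a b =>
      lam * (a ^ (k₁ + m + 1) / ((k₁ + m + 1).factorial : ℝ)) *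
          (b ^ (k₂ + m + 1) / ((k₂ + m + 1).factorial : ℝ)) +
        a ^ m / (m.factorial : ℝ) * g a * (b ^ (r + m + 1) / ((r + m + 1).factorial : ℝ)) := by
  induction m with
  | zero =>
    funext a b
    simp_rw [hIrec, hI0, integral_const_mul, integral_mul_const, integral_const_mul,
      integral_pow_div_factorial]
    simp only [pow_zero, Nat.factorial_zero, Nat.cast_one, div_one, one_mul, add_zero]
    rw [integral_eq_sub_of_hasDerivAt (fun x _ => hg x) (hg'.intervalIntegrable _ _), hg0]
    ring
  | succ m ih =>
    have hg_cont : Continuous g := continuous_iff_continuousAt.2 fun x => (hg x).continuousAt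
    funext a b
    rw [hIrec, ih]
    beta_reduce
    rw [integral_integral_mul_add_mul, integral_pow_div_factorial, integral_pow_div_factorial,
      integral_const_mul, integral_pow_div_factorial,
      integral_pow_succ_div_factorial_mul_deriv hg hg', ← add_assoc k₁, ← add_assoc k₂,
      ← add_assoc r]
    · ring
    all_goals exact Continuous.intervalIntegrable (by fun_prop) _ _

theorem recurrence_integral (k₁ k₂ : ℕ) (lam K : ℝ) (r : ℕ) (f : ℝ → ℝ)
    (hf : Differentiable ℝ f) (hf' : Continuous (deriv f))
    (I : ℕ → ℝ → ℝ → ℝ)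
    (hI0 : ∀ a b : ℝ, I 0 a b =
      lam * a ^ k₁ * b ^ k₂ / ((Nat.factorial k₁ : ℝ) * (Nat.factorial k₂ : ℝ)))
    (hIrec : ∀ (m : ℕ) (a b : ℝ), I (m + 1) a b =
      (∫ x in (0:ℝ)..a, ∫ y in (0:ℝ)..b, I m x y) +
        b ^ (m + 1 + r) / (Nat.factorial (r + m + 1) : ℝ) *
          ∫ x in (0:ℝ)..a, x ^ m / (Nat.factorial m : ℝ) * deriv f (K + x)) :
    ∀ (m : ℕ) (a b : ℝ), 0 < a → 0 < b →
      I (m + 1) a b =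
        lam * a ^ (k₁ + m + 1) * b ^ (k₂ + m + 1) /
            ((Nat.factorial (k₁ + m + 1) : ℝ) * (Nat.factorial (k₂ + m + 1) : ℝ)) +
          a ^ m / (Nat.factorial m : ℝ) * (b ^ (m + 1 + r) / (Nat.factorial (m + 1 + r) : ℝ)) *
            (f (K + a) - f K) := by
  have hg (x : ℝ) : HasDerivAt (fun x => f (K + x) - f K) (deriv f (K + x)) x :=
    ((hf (K + x)).hasDerivAt.comp_const_add K x).sub_const (f K)
  have hI := eq_of_double_integral_recurrence (k₁ := k₁) (k₂ := k₂) (r := r) (lam := lam)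
    (I := I) hg (hf'.comp (continuous_const_add K)) (by simp) (fun a b => by rw [hI0]; ring)
    (fun m a b => by rw [hIrec, show m + 1 + r = r + m + 1 by ring])
  intro m a b _ _
  rw [hI m, show m + 1 + r = r + m + 1 by ring]
  ring
end

section
/- Let f : ℝ → ℝ be differentiable. Then f satisfies ((x₁ − x₀)/2)(f'(x₁) + f'(x₀)) = f(x₁) − f(x₀) for all x₀, x₁ ∈ ℝ if and only if f is a quadratic polynomial, i.e., f(x) = ax² + bx + c for some constants a, b, c ∈ ℝ. -/
/-! The trapezoid identity, applied to the three sides of the triangle with vertices `0`, `y`, `1`,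
gives three equations whose sum no longer involves `f`; it says that `f'` is affine. An
everywhere-differentiable function with affine derivative is a quadratic polynomial by the mean value
theorem, and conversely the trapezoid rule is exact for quadratics by direct computation. -/

theorem hasDerivAt_quadratic (a b c x : ℝ) :
    HasDerivAt (fun x => a * x ^ 2 + b * x + c) (2 * a * x + b) x := by
  simpa [mul_comm, mul_left_comm] using
    (((hasDerivAt_pow 2 x).const_mul a).add ((hasDerivAt_id x).const_mul b)).add_const c

theorem eq_affine_of_trapezoid {F g : ℝ → ℝ}
    (H : ∀ x₀ x₁ : ℝ, (x₁ - x₀) / 2 * (g x₁ + g x₀) = F x₁ - F x₀) (y : ℝ) :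
    g y = g 0 + (g 1 - g 0) * y := by
  linear_combination 2 * H 0 y + 2 * H y 1 - 2 * H 0 1

theorem eq_quadratic_of_deriv_eq {f : ℝ → ℝ} (hf : Differentiable ℝ f) {a b : ℝ}
    (hderiv : ∀ x, deriv f x = 2 * a * x + b) (x : ℝ) :
    f x = a * x ^ 2 + b * x + f 0 := by
  set q : ℝ → ℝ := fun x => a * x ^ 2 + b * x
  have hq : ∀ x, HasDerivAt q (2 * a * x + b) x := by
    simpa using hasDerivAt_quadratic a b 0
  have hconst : f x - q x = f 0 - q 0 :=
    is_const_of_deriv_eq_zero (hf.sub fun x => (hq x).differentiableAt)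
      (fun y => by rw [deriv_sub (hf y) (hq y).differentiableAt, hderiv, (hq y).deriv, sub_self])
      x 0
  simp only [q] at hconst
  linarith

theorem trapezoid_exact_iff_quadratic (f : ℝ → ℝ) (hf : Differentiable ℝ f) :
    (∀ x₀ x₁ : ℝ, (x₁ - x₀) / 2 * (deriv f x₁ + deriv f x₀) = f x₁ - f x₀) ↔
      ∃ a b c : ℝ, ∀ x : ℝ, f x = a * x ^ 2 + b * x + c := by
  constructor
  · intro H
    refine ⟨(deriv f 1 - deriv f 0) / 2, deriv f 0, f 0, eq_quadratic_of_deriv_eq hf fun y => ?_⟩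
    rw [eq_affine_of_trapezoid H y]
    ring
  · rintro ⟨a, b, c, hquad⟩
    obtain rfl : f = fun x => a * x ^ 2 + b * x + c := funext hquad
    intro x₀ x₁
    simp only [(hasDerivAt_quadratic a b c _).deriv]
    ring
end
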